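/- Let (Ω, ℙ) be a probability space, X̄ and n finite types, M ≥ 1 a natural number, and C : Fin M → Ω → X̄ measurable random variables that are pairwise independent and identically distributed with common law given by a probability mass function ν on X̄. Let f : X̄ → Matrix n n ℂ be such that f x is Hermitian for every x, and set F̄ := ∑_x (ν x) • f x. Then 𝔼_ℙ[ ‖ (1/M) ∑_{m : Fin M} f (C m) − F̄ ‖₁ ] ≤ Re Tr √( (1/M) • ( ∑_x (ν x) • (f x * f x) − F̄ * F̄ ) ), where the matrix ∑_x (ν x) • (f x * f x) − F̄ * F̄ is positive semidefinite and √ is its positive semidefinite square root. -/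

import Mathlib

open Matrix MeasureTheory ProbabilityTheory
open scoped ComplexOrder

/-- Positive semidefinite square root, extended to a total function
(it agrees with `Matrix.PosSemidef.sqrt` on positive semidefinite matrices). -/
noncomputable def psqrt {n : Type*} [Fintype n] [DecidableEq n] (A : Matrix n n ℂ) :
    Matrix n n ℂ :=
  open scoped Classical in
  if h : A.PosSemidef then
    h.1.eigenvectorUnitary.1 * diagonal ((↑) ∘ (√·) ∘ h.1.eigenvalues) *
      (star h.1.eigenvectorUnitary : Matrix n n ℂ)
  else 0

/-- The trace norm ‖A‖₁ = Re Tr √(AᴴA). -/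
noncomputable def traceNorm {n : Type*} [Fintype n] [DecidableEq n] (A : Matrix n n ℂ) : ℝ :=
  (psqrt (Aᴴ * A)).trace.re

/-!
For Hermitian `A` and positive definite `B`, expanding `0 ≤ Tr ((|A| - B) B⁻¹ (|A| - B))` gives
`2 ‖A‖₁ ≤ Tr B + Tr (B⁻¹ A²)`. The right-hand side is linear in `A²`, so averaging over the joint
law of the samples with `B = √S + t` for the second moment `S` of the deviation gives
`𝔼 ‖A‖₁ ≤ Tr √S + t · dim / 2`, and `t → 0`. Pairwise independence kills the cross terms of
`S = 𝔼 A²`, leaving `S = (𝔼 f² - (𝔼 f)²) / M`.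
-/

open scoped MatrixOrder

section TraceNorm

variable {n : Type*} [Fintype n]

lemma Matrix.PosSemidef.re_trace_nonneg {A : Matrix n n ℂ} (hA : A.PosSemidef) :
    0 ≤ A.trace.re :=
  (Complex.nonneg_iff.mp hA.trace_nonneg).1

lemma Matrix.IsHermitian.posSemidef_mul_self {A : Matrix n n ℂ} (hA : A.IsHermitian) :
    (A * A).PosSemidef := by
  simpa only [hA.eq] using posSemidef_conjTranspose_mul_self A

variable [DecidableEq n]

lemma psqrt_eq_sqrt {A : Matrix n n ℂ} (hA : A.PosSemidef) : psqrt A = CFC.sqrt A := by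
  rw [CFC.sqrt_eq_real_sqrt A hA.nonneg, cfcₙ_eq_cfc (hf0 := Real.sqrt_zero), hA.1.cfc_eq,
    IsHermitian.cfc, psqrt, dif_pos hA, Unitary.conjStarAlgAut_apply]
  rfl

lemma posSemidef_psqrt {A : Matrix n n ℂ} (hA : A.PosSemidef) : (psqrt A).PosSemidef :=
  psqrt_eq_sqrt hA ▸ (CFC.sqrt_nonneg A).posSemidef

lemma psqrt_mul_psqrt {A : Matrix n n ℂ} (hA : A.PosSemidef) : psqrt A * psqrt A = A := by
  rw [psqrt_eq_sqrt hA, CFC.sqrt_mul_sqrt_self A hA.nonneg]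

lemma Matrix.PosSemidef.re_trace_mul_nonneg {P Q : Matrix n n ℂ} (hP : P.PosSemidef)
    (hQ : Q.PosSemidef) : 0 ≤ (P * Q).trace.re := by
  have hR := posSemidef_psqrt hQ
  have : (psqrt Q * P * psqrt Q).PosSemidef := by
    simpa only [hR.1.eq] using hP.conjTranspose_mul_mul_same (psqrt Q)
  rw [← psqrt_mul_psqrt hQ, ← mul_assoc, trace_mul_cycle]
  exact this.re_trace_nonneg

lemma traceNorm_of_isHermitian {A : Matrix n n ℂ} (hA : A.IsHermitian) :
    traceNorm A = (psqrt (A * A)).trace.re := by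
  rw [traceNorm, hA.eq]

lemma two_mul_re_trace_le {R B : Matrix n n ℂ} (hR : R.IsHermitian) (hB : B.PosDef) :
    2 * R.trace.re ≤ B.trace.re + (B⁻¹ * (R * R)).trace.re := by
  have hdet : IsUnit B.det := (isUnit_iff_isUnit_det B).mp hB.isUnit
  have hsq : ((R - B) * B⁻¹ * (R - B)).PosSemidef := by
    simpa only [(hR.sub hB.1).eq] using hB.inv.posSemidef.conjTranspose_mul_mul_same (R - B)
  have hexp : (R - B) * B⁻¹ * (R - B) = R * B⁻¹ * R - R - R + B := by
    have hBR : B * B⁻¹ * R = R := by rw [mul_nonsing_inv B hdet, one_mul]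
    have hRB : R * B⁻¹ * B = R := by rw [mul_assoc, nonsing_inv_mul B hdet, mul_one]
    have hBB : B * B⁻¹ * B = B := by rw [mul_nonsing_inv B hdet, one_mul]
    rw [sub_mul, sub_mul, mul_sub, mul_sub, hBR, hRB, hBB]
    abel
  have := hsq.re_trace_nonneg
  rw [hexp, trace_add, trace_sub, trace_sub, trace_mul_cycle, Matrix.trace_mul_comm] at this
  simp only [Complex.add_re, Complex.sub_re] at this
  linarith

lemma two_mul_traceNorm_le {A B : Matrix n n ℂ} (hA : A.IsHermitian) (hB : B.PosDef) :
    2 * traceNorm A ≤ B.trace.re + (B⁻¹ * (A * A)).trace.re := by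
  have hAA := hA.posSemidef_mul_self
  have := two_mul_re_trace_le (posSemidef_psqrt hAA).1 hB
  rwa [psqrt_mul_psqrt hAA, ← traceNorm_of_isHermitian hA] at this

lemma re_trace_inv_add_smul_one_mul_sq_le {Q : Matrix n n ℂ} (hQ : Q.PosSemidef) {t : ℝ}
    (ht : 0 < t) : ((Q + t • 1)⁻¹ * (Q * Q)).trace.re ≤ Q.trace.re := by
  set B := Q + t • (1 : Matrix n n ℂ) with hBdef
  have hB : B.PosDef := PosDef.posSemidef_add hQ (PosDef.one.smul ht)
  have hQQ : B⁻¹ * (Q * Q) = Q - t • (B⁻¹ * Q) := calc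
    B⁻¹ * (Q * Q) = B⁻¹ * ((B - t • 1) * Q) := by rw [hBdef, add_sub_cancel_right]
    _ = Q - t • (B⁻¹ * Q) := by
      rw [sub_mul, mul_sub, ← mul_assoc, nonsing_inv_mul B ((isUnit_iff_isUnit_det B).mp hB.isUnit),
        one_mul, smul_mul_assoc, one_mul, mul_smul_comm]
  have := hB.inv.posSemidef.re_trace_mul_nonneg hQ
  rw [hQQ, trace_sub, trace_smul, Complex.sub_re, Complex.smul_re, smul_eq_mul]
  nlinarith

lemma sum_mul_traceNorm_le_re_trace_psqrt {ι : Type*} [Fintype ι] {p : ι → ℝ}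
    (hp0 : ∀ i, 0 ≤ p i) (hp1 : ∑ i, p i = 1) {A : ι → Matrix n n ℂ}
    (hA : ∀ i, (A i).IsHermitian) :
    ∑ i, p i * traceNorm (A i) ≤ (psqrt (∑ i, p i • (A i * A i))).trace.re := by
  set S := ∑ i, p i • (A i * A i)
  have hS : S.PosSemidef := posSemidef_sum _ fun i _ ↦ (hA i).posSemidef_mul_self.smul (hp0 i)
  set Q := psqrt S
  have hQ : Q.PosSemidef := posSemidef_psqrt hS
  set d : ℝ := (Fintype.card n : ℝ)
  have bound (t : ℝ) (ht : 0 < t) : ∑ i, p i * traceNorm (A i) ≤ Q.trace.re + t * d := by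
    set B := Q + t • (1 : Matrix n n ℂ)
    have hB : B.PosDef := PosDef.posSemidef_add hQ (PosDef.one.smul ht)
    have htrB : B.trace.re = Q.trace.re + t * d := by simp [B, d]
    have hlin : ∑ i, p i * (B⁻¹ * (A i * A i)).trace.re = (B⁻¹ * S).trace.re := by
      simp only [S, Finset.mul_sum, mul_smul_comm, trace_sum, trace_smul, Complex.re_sum,
        Complex.smul_re, smul_eq_mul]
    have hBS : (B⁻¹ * S).trace.re ≤ Q.trace.re := by
      have := re_trace_inv_add_smul_one_mul_sq_le hQ ht
      rwa [show Q * Q = S from psqrt_mul_psqrt hS] at this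
    have : 2 * ∑ i, p i * traceNorm (A i) ≤ B.trace.re + (B⁻¹ * S).trace.re := calc
      2 * ∑ i, p i * traceNorm (A i) = ∑ i, p i * (2 * traceNorm (A i)) := by
          rw [Finset.mul_sum]; congr! 1; ring
      _ ≤ ∑ i, p i * (B.trace.re + (B⁻¹ * (A i * A i)).trace.re) :=
          Finset.sum_le_sum fun i _ ↦
            mul_le_mul_of_nonneg_left (two_mul_traceNorm_le (hA i) hB) (hp0 i)
      _ = B.trace.re + (B⁻¹ * S).trace.re := by
          simp only [mul_add, Finset.sum_add_distrib, ← Finset.sum_mul, hp1, one_mul, hlin]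
    have : 0 ≤ t * d := by positivity
    linarith
  refine le_of_forall_pos_le_add fun ε hε ↦ (bound (ε / (d + 1)) (by positivity)).trans ?_
  gcongr
  rw [div_mul_eq_mul_div, div_le_iff₀ (by positivity)]
  nlinarith

end TraceNorm

section Moments

lemma sum_smul_sub_sum_smul_eq_zero {α E : Type*} [Fintype α] [AddCommGroup E] [Module ℝ E]
    {ν : α → ℝ} (hν1 : ∑ x, ν x = 1) (f : α → E) :
    ∑ x, ν x • (f x - ∑ y, ν y • f y) = 0 := by
  rw [Finset.sum_congr rfl fun x _ ↦ smul_sub _ _ _, Finset.sum_sub_distrib, ← Finset.sum_smul,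
    hν1, one_smul, sub_self]

lemma one_div_smul_sum_sub_eq {E : Type*} [AddCommGroup E] [Module ℝ E] {M : ℕ} (hM : M ≠ 0)
    (a : Fin M → E) (b : E) :
    (1 / (M : ℝ)) • ∑ m, a m - b = (1 / (M : ℝ)) • ∑ m, (a m - b) := by
  rw [Finset.sum_sub_distrib, smul_sub, Finset.sum_const, Finset.card_univ, Fintype.card_fin,
    ← Nat.cast_smul_eq_nsmul ℝ, smul_smul, one_div_mul_cancel (Nat.cast_ne_zero.mpr hM), one_smul]

variable {R : Type*} [Ring R] [Algebra ℝ R]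

lemma sum_smul_sub_mul_sub {α : Type*} [Fintype α] {ν : α → ℝ} (hν1 : ∑ x, ν x = 1)
    (f : α → R) :
    ∑ x, ν x • ((f x - ∑ y, ν y • f y) * (f x - ∑ y, ν y • f y)) =
      ∑ x, ν x • (f x * f x) - (∑ x, ν x • f x) * (∑ x, ν x • f x) := by
  set F := ∑ y, ν y • f y
  have hfF : ∑ x, ν x • (f x * F) = F * F := by simp_rw [← smul_mul_assoc, ← Finset.sum_mul]; rfl
  have hFf : ∑ x, ν x • (F * f x) = F * F := by simp_rw [← mul_smul_comm, ← Finset.mul_sum]; rfl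
  have hFF : ∑ x, ν x • (F * F) = F * F := by rw [← Finset.sum_smul, hν1, one_smul]
  simp only [sub_mul, mul_sub, smul_sub, Finset.sum_sub_distrib, hfF, hFf, hFF]
  abel

lemma sum_smul_sum_mul_sum_of_orthogonal {β ι : Type*} [Fintype β] [Fintype ι] [DecidableEq ι]
    (p : β → ℝ) (X : ι → β → R) (S : R)
    (hX : ∀ i j, ∑ v, p v • (X i v * X j v) = if i = j then S else 0) :
    ∑ v, p v • ((∑ i, X i v) * (∑ i, X i v)) = Fintype.card ι • S := by
  simp_rw [Finset.sum_mul_sum, Finset.smul_sum]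
  rw [Finset.sum_comm]
  simp_rw [Finset.sum_comm (s := Finset.univ (α := β)), hX, Finset.sum_ite_eq, Finset.mem_univ,
    if_true, Finset.sum_const, Finset.card_univ]

end Moments

section Distribution

variable {Ω β : Type*} [MeasurableSpace Ω] {P : Measure Ω} [Fintype β] [MeasurableSpace β]
  [MeasurableSingletonClass β] {Y : Ω → β}

lemma integral_comp_eq_sum [IsFiniteMeasure P] (hY : Measurable Y) (g : β → ℝ) :
    ∫ ω, g (Y ω) ∂P = ∑ v, P.real (Y ⁻¹' {v}) * g v := by
  rw [← integral_map hY.aemeasurable (Measurable.of_discrete (f := g)).aestronglyMeasurable,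
    integral_fintype .of_finite]
  simp [map_measureReal_apply hY (measurableSet_singleton _)]

lemma sum_measureReal_preimage_smul_comp [IsFiniteMeasure P] {γ E : Type*} [Fintype γ]
    [DecidableEq γ] [AddCommMonoid E] [Module ℝ E] (hY : Measurable Y) (π : β → γ) (h : γ → E) :
    ∑ v, P.real (Y ⁻¹' {v}) • h (π v) = ∑ y, P.real ((π ∘ Y) ⁻¹' {y}) • h y := by
  rw [← Finset.sum_fiberwise Finset.univ π]
  refine Finset.sum_congr rfl fun y _ ↦ ?_
  rw [Finset.sum_congr rfl fun v hv ↦ by rw [(Finset.mem_filter.mp hv).2], ← Finset.sum_smul,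
    sum_measureReal_preimage_singleton _ fun v _ ↦ hY (measurableSet_singleton v)]
  congr 2
  ext ω
  simp

lemma sum_measureReal_preimage_singleton_eq_one [IsProbabilityMeasure P] (hY : Measurable Y) :
    ∑ v, P.real (Y ⁻¹' {v}) = 1 := by
  rw [sum_measureReal_preimage_singleton _ fun v _ ↦ hY (measurableSet_singleton v)]
  simp

end Distribution

section Samples

variable {Ω α ι R : Type*} [MeasurableSpace Ω] {P : Measure Ω} [IsFiniteMeasure P] [Fintype α]
  [MeasurableSpace α] [MeasurableSingletonClass α] [Fintype ι] [DecidableEq ι] [Ring R]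
  [Algebra ℝ R]

lemma sum_measureReal_smul_sq_sum_of_pairwise_indep {C : ι → Ω → α}
    (hC : ∀ i, Measurable (C i)) {ν : α → ℝ} (hν0 : ∀ x, 0 ≤ ν x)
    (hlaw : ∀ i x, P {ω | C i ω = x} = ENNReal.ofReal (ν x))
    (hindep : ∀ i j, i ≠ j → IndepFun (C i) (C j) P) {g : α → R} (hg : ∑ x, ν x • g x = 0) :
    ∑ v : ι → α, P.real ((fun ω i ↦ C i ω) ⁻¹' {v}) • ((∑ i, g (v i)) * ∑ i, g (v i)) =
      Fintype.card ι • ∑ x, ν x • (g x * g x) := by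
  classical
  have hφ : Measurable fun ω i ↦ C i ω := measurable_pi_iff.mpr hC
  have hlaw' (i : ι) (x : α) : P.real (C i ⁻¹' {x}) = ν x := by
    rw [measureReal_def, ← ENNReal.toReal_ofReal (hν0 x), ← hlaw i x]
    rfl
  refine sum_smul_sum_mul_sum_of_orthogonal _ _ _ fun i j ↦ ?_
  split_ifs with hij
  · subst hij
    rw [sum_measureReal_preimage_smul_comp hφ (fun v ↦ v i) fun x ↦ g x * g x]
    exact Finset.sum_congr rfl fun x _ ↦ by rw [← hlaw' i x]; rfl
  · have hpair (x y : α) :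
        P.real ((fun ω ↦ (C i ω, C j ω)) ⁻¹' {(x, y)}) = ν x * ν y := by
      rw [← hlaw' i x, ← hlaw' j y, measureReal_def, measureReal_def, measureReal_def,
        ← ENNReal.toReal_mul, ← (hindep i j hij).measure_inter_preimage_eq_mul _ _
          (measurableSet_singleton x) (measurableSet_singleton y)]
      congr 2
      ext ω
      simp
    rw [sum_measureReal_preimage_smul_comp hφ (fun v ↦ (v i, v j)) fun q ↦ g q.1 * g q.2,
      Fintype.sum_prod_type]
    simp_rw [Function.comp_def, hpair, ← smul_mul_smul_comm, ← Finset.sum_mul_sum, hg, zero_mul]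

lemma sum_measureReal_smul_sampleMean_sq {M : ℕ} {C : Fin M → Ω → α}
    (hC : ∀ m, Measurable (C m)) {ν : α → ℝ} (hν0 : ∀ x, 0 ≤ ν x)
    (hlaw : ∀ m x, P {ω | C m ω = x} = ENNReal.ofReal (ν x))
    (hindep : ∀ m m', m ≠ m' → IndepFun (C m) (C m') P) {g : α → R} (hg : ∑ x, ν x • g x = 0) :
    ∑ v : Fin M → α, P.real ((fun ω m ↦ C m ω) ⁻¹' {v}) •
        (((1 / (M : ℝ)) • ∑ m, g (v m)) * ((1 / (M : ℝ)) • ∑ m, g (v m))) =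
      (1 / (M : ℝ)) • ∑ x, ν x • (g x * g x) := by
  simp_rw [smul_mul_smul, smul_comm (P.real _) (1 / (M : ℝ) * (1 / (M : ℝ)))]
  rw [← Finset.smul_sum, sum_measureReal_smul_sq_sum_of_pairwise_indep hC hν0 hlaw hindep hg,
    Fintype.card_fin, ← Nat.cast_smul_eq_nsmul ℝ, smul_smul]
  rcases eq_or_ne (M : ℝ) 0 with hM | hM <;> simp [hM]

end Samples

/-- Second-moment trace-norm bound (eq. (25) in the paper's proof of its Covering Lemma):
for pairwise-independent, identically distributed Hermitian-matrix-valued samples, the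
expected trace-norm deviation of the sample mean from the mean is at most
`Tr √((1/M)(E[f²] − (E[f])²))`; moreover `E[f²] − (E[f])²` is positive semidefinite. -/
theorem second_moment_trace_norm_bound
    {Xb : Type*} [Fintype Xb] [MeasurableSpace Xb] [MeasurableSingletonClass Xb]
    {n : Type*} [Fintype n] [DecidableEq n]
    {Ω : Type*} [MeasurableSpace Ω] (Pr : Measure Ω) [IsProbabilityMeasure Pr]
    (M : ℕ) (hM : 1 ≤ M)
    (ν : Xb → ℝ) (hν0 : ∀ x, 0 ≤ ν x) (hν1 : ∑ x, ν x = 1)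
    (C : Fin M → Ω → Xb) (hCmeas : ∀ m, Measurable (C m))
    (hlaw : ∀ m x, Pr {ω | C m ω = x} = ENNReal.ofReal (ν x))
    (hindep : ∀ m m', m ≠ m' → IndepFun (C m) (C m') Pr)
    (f : Xb → Matrix n n ℂ) (hf : ∀ x, (f x).IsHermitian) :
    ((∑ x, ν x • (f x * f x)) -
        (∑ x, ν x • f x) * (∑ x, ν x • f x)).PosSemidef ∧
    ∫ ω, traceNorm ((1 / (M : ℝ)) • (∑ m : Fin M, f (C m ω)) - ∑ x, ν x • f x) ∂Pr ≤
      ((psqrt ((1 / (M : ℝ)) • ((∑ x, ν x • (f x * f x)) -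
        (∑ x, ν x • f x) * (∑ x, ν x • f x)))).trace).re := by
  set F := ∑ x, ν x • f x
  have hg0 : ∑ x, ν x • (f x - F) = 0 := sum_smul_sub_sum_smul_eq_zero hν1 f
  have hg (x : Xb) : (f x - F).IsHermitian :=
    (hf x).sub (isSelfAdjoint_sum _ fun y _ ↦ (hf y).smul (.all (ν y)))
  rw [← sum_smul_sub_mul_sub hν1 f]
  refine ⟨posSemidef_sum _ fun x _ ↦ (hg x).posSemidef_mul_self.smul (hν0 x), ?_⟩
  have hφ : Measurable fun ω m ↦ C m ω := measurable_pi_iff.mpr hCmeas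
  simp only [one_div_smul_sum_sub_eq (by omega : M ≠ 0)]
  rw [← sum_measureReal_smul_sampleMean_sq hCmeas hν0 hlaw hindep hg0]
  refine (integral_comp_eq_sum hφ
    fun v ↦ traceNorm ((1 / (M : ℝ)) • ∑ m, (f (v m) - F))).trans_le ?_
  exact sum_mul_traceNorm_le_re_trace_psqrt (fun _ ↦ measureReal_nonneg)
    (sum_measureReal_preimage_singleton_eq_one hφ)
    fun v ↦ IsHermitian.smul (isSelfAdjoint_sum _ fun m _ ↦ hg (v m)) (.all _)
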